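/- Let (G, φ, β, λ) be a conformal H-minimal Legendrian datum on an open set Ω ⊆ ℝ². Then at every point x ∈ Ω with G(x) ≠ 0: 𝔯³·∇β·∇𝔯 = e^{2λ}·𝔯²·σ/√(1+σ²) + (1/4)·( ∂₁( 𝔯⁴·∂₁σ/(1+σ²) ) + ∂₂( 𝔯⁴·∂₂σ/(1+σ²) ) ), where moreover 𝔯²·σ/√(1+σ²) = 2φ. -/

import Mathlib

open MeasureTheory Real Set
noncomputable section
open Filter Topology

abbrev R2 : Type := EuclideanSpace ℝ (Fin 2)
abbrev R4 : Type := EuclideanSpace ℝ (Fin 4)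

/-- Real inner product on ℝ⁴. -/
def rin (u v : R4) : ℝ := inner ℝ u v

/-- Standard complex structure on ℝ⁴ ≅ ℂ². -/
def Jc (v : R4) : R4 := (WithLp.equiv 2 (Fin 4 → ℝ)).symm ![-v 1, v 0, -v 3, v 2]

/-- Partial derivative in the j-th coordinate direction. -/
def pd {E : Type*} [NormedAddCommGroup E] [NormedSpace ℝ E]
    (j : Fin 2) (f : R2 → E) (x : R2) : E :=
  fderiv ℝ f x (EuclideanSpace.single j 1)

/-- Flat Laplacian acting componentwise. -/
def lap {E : Type*} [NormedAddCommGroup E] [NormedSpace ℝ E]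
    (f : R2 → E) (x : R2) : E :=
  pd 0 (pd 0 f) x + pd 1 (pd 1 f) x

structure HMinimalDatum (Ω : Set R2) (G : R2 → R4) (φ β lam : R2 → ℝ) : Prop where
  isOpen : IsOpen Ω
  smooth_G : ∀ x ∈ Ω, ContDiffAt ℝ (⊤ : ℕ∞) G x
  smooth_φ : ∀ x ∈ Ω, ContDiffAt ℝ (⊤ : ℕ∞) φ x
  smooth_β : ∀ x ∈ Ω, ContDiffAt ℝ (⊤ : ℕ∞) β x
  smooth_lam : ∀ x ∈ Ω, ContDiffAt ℝ (⊤ : ℕ∞) lam x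
  conf_orth : ∀ x ∈ Ω, rin (pd 0 G x) (pd 1 G x) = 0
  conf_norm₁ : ∀ x ∈ Ω, ‖pd 0 G x‖ = Real.exp (lam x)
  conf_norm₂ : ∀ x ∈ Ω, ‖pd 1 G x‖ = Real.exp (lam x)
  lagrangian : ∀ x ∈ Ω, rin (pd 0 G x) (Jc (pd 1 G x)) = 0
  legendrian : ∀ x ∈ Ω, ∀ j : Fin 2, pd j φ x = rin (G x) (Jc (pd j G x))
  harmonic_β : ∀ x ∈ Ω, lap β x = 0
  hminimal : ∀ x ∈ Ω,
    Jc (lap G x) = (2 * pd 0 β x) • pd 0 G x + (2 * pd 1 β x) • pd 1 G x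

/-- The Folland–Korányi gauge composed with the Legendrian immersion. -/
def kGauge (G : R2 → R4) (φ : R2 → ℝ) (x : R2) : ℝ :=
  (‖G x‖ ^ 4 + 4 * φ x ^ 2) ^ ((1:ℝ)/4)

/-- The phase σ = 2φ/ρ². -/
def phase (G : R2 → R4) (φ : R2 → ℝ) (x : R2) : ℝ := 2 * φ x / ‖G x‖ ^ 2

/-- Dirichlet energy density |∇σ|²/(1+σ²)² of arctan σ. -/
def energyDensity (G : R2 → R4) (φ : R2 → ℝ) (x : R2) : ℝ :=
  ((pd 0 (phase G φ) x) ^ 2 + (pd 1 (phase G φ) x) ^ 2) / (1 + (phase G φ x) ^ 2) ^ 2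


section Helpers

lemma pd_congr {E : Type*} [NormedAddCommGroup E] [NormedSpace ℝ E]
    {f g : R2 → E} {x : R2} (h : f =ᶠ[nhds x] g) (j : Fin 2) :
    pd j f x = pd j g x := by
  unfold pd; rw [h.fderiv_eq]

lemma contDiffAt_pd {E : Type*} [NormedAddCommGroup E] [NormedSpace ℝ E]
    {f : R2 → E} {x : R2} (hf : ContDiffAt ℝ (⊤ : ℕ∞) f x) (j : Fin 2) :
    ContDiffAt ℝ (⊤ : ℕ∞) (pd j f) x := by
  have h1 : ContDiffAt ℝ (⊤ : ℕ∞) (fderiv ℝ f) x := hf.fderiv_right (by simp)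
  exact h1.clm_apply contDiffAt_const

lemma pd_inner {f g : R2 → R4} {x : R2} (hf : DifferentiableAt ℝ f x)
    (hg : DifferentiableAt ℝ g x) (j : Fin 2) :
    pd j (fun y => rin (f y) (g y)) x
      = rin (pd j f x) (g x) + rin (f x) (pd j g x) := by
  unfold pd rin
  rw [fderiv_inner_apply ℝ hf hg]
  exact add_comm _ _

lemma pd_mul {a b : R2 → ℝ} {x : R2} (ha : DifferentiableAt ℝ a x)
    (hb : DifferentiableAt ℝ b x) (j : Fin 2) :
    pd j (fun y => a y * b y) x = pd j a x * b x + a x * pd j b x := by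
  unfold pd
  rw [fderiv_fun_mul ha hb]
  simp [smul_eq_mul]
  ring

lemma pd_const_mul {a : R2 → ℝ} {x : R2} (ha : DifferentiableAt ℝ a x) (c : ℝ) (j : Fin 2) :
    pd j (fun y => c * a y) x = c * pd j a x := by
  unfold pd
  rw [fderiv_const_mul ha c]
  simp

lemma pd_add {a b : R2 → ℝ} {x : R2} (ha : DifferentiableAt ℝ a x)
    (hb : DifferentiableAt ℝ b x) (j : Fin 2) :
    pd j (fun y => a y + b y) x = pd j a x + pd j b x := by
  unfold pd
  rw [fderiv_fun_add ha hb]; simp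

lemma pd_sub {a b : R2 → ℝ} {x : R2} (ha : DifferentiableAt ℝ a x)
    (hb : DifferentiableAt ℝ b x) (j : Fin 2) :
    pd j (fun y => a y - b y) x = pd j a x - pd j b x := by
  unfold pd
  rw [fderiv_fun_sub ha hb]; simp

lemma pd_pow {a : R2 → ℝ} {x : R2} (ha : DifferentiableAt ℝ a x) (n : ℕ) (j : Fin 2) :
    pd j (fun y => a y ^ n) x = n * a x ^ (n - 1) * pd j a x := by
  have h : HasFDerivAt (fun y => a y ^ n) ((n * a x ^ (n - 1)) • fderiv ℝ a x) x :=
    (hasDerivAt_pow n (a x)).comp_hasFDerivAt x ha.hasFDerivAt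
  unfold pd
  rw [h.fderiv]
  simp [mul_assoc]

lemma pd_inv {b : R2 → ℝ} {x : R2} (hb : DifferentiableAt ℝ b x) (hbx : b x ≠ 0) (j : Fin 2) :
    pd j (fun y => (b y)⁻¹) x = -(b x ^ 2)⁻¹ * pd j b x := by
  have h : HasFDerivAt (fun y => (b y)⁻¹) (-(b x ^ 2)⁻¹ • fderiv ℝ b x) x :=
    (hasDerivAt_inv hbx).comp_hasFDerivAt x hb.hasFDerivAt
  unfold pd
  rw [h.fderiv]
  simp

lemma diff_inv {b : R2 → ℝ} {x : R2} (hb : DifferentiableAt ℝ b x) (hbx : b x ≠ 0) :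
    DifferentiableAt ℝ (fun y => (b y)⁻¹) x := by
  have h : HasFDerivAt (fun y => (b y)⁻¹) (-(b x ^ 2)⁻¹ • fderiv ℝ b x) x :=
    (hasDerivAt_inv hbx).comp_hasFDerivAt x hb.hasFDerivAt
  exact h.differentiableAt

lemma pd_div {a b : R2 → ℝ} {x : R2} (ha : DifferentiableAt ℝ a x)
    (hb : DifferentiableAt ℝ b x) (hbx : b x ≠ 0) (j : Fin 2) :
    pd j (fun y => a y / b y) x = (pd j a x * b x - a x * pd j b x) / b x ^ 2 := by
  have h : (fun y => a y / b y) = fun y => a y * (b y)⁻¹ := by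
    funext y; rw [div_eq_mul_inv]
  rw [h, pd_mul ha (diff_inv hb hbx) j, pd_inv hb hbx j]
  field_simp
  ring

lemma diff_div {a b : R2 → ℝ} {x : R2} (ha : DifferentiableAt ℝ a x)
    (hb : DifferentiableAt ℝ b x) (hbx : b x ≠ 0) :
    DifferentiableAt ℝ (fun y => a y / b y) x := by
  have h : (fun y => a y / b y) = fun y => a y * (b y)⁻¹ := by
    funext y; rw [div_eq_mul_inv]
  rw [h]; exact ha.mul (diff_inv hb hbx)


lemma Jc_add (a b : R4) : Jc (a + b) = Jc a + Jc b := by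
  unfold Jc; ext i
  fin_cases i <;> simp [WithLp.equiv_symm_apply, PiLp.toLp_apply] <;> ring

lemma Jc_smul (c : ℝ) (a : R4) : Jc (c • a) = c • Jc a := by
  unfold Jc; ext i
  fin_cases i <;> simp [WithLp.equiv_symm_apply, PiLp.toLp_apply]

def JL : R4 →L[ℝ] R4 :=
  LinearMap.toContinuousLinearMap
    { toFun := Jc
      map_add' := Jc_add
      map_smul' := Jc_smul }

lemma Jc_eq : Jc = ⇑JL := rfl

lemma Jc_Jc (a : R4) : Jc (Jc a) = -a := by
  unfold Jc; ext i
  fin_cases i <;> simp [WithLp.equiv_symm_apply, PiLp.toLp_apply]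

lemma rin_Jc_self (a : R4) : rin a (Jc a) = 0 := by
  unfold rin Jc
  rw [PiLp.inner_apply]
  simp [Fin.sum_univ_four, WithLp.equiv_symm_apply, PiLp.toLp_apply]
  ring

lemma rin_self (a : R4) : rin a a = ‖a‖ ^ 2 := by
  unfold rin; exact real_inner_self_eq_norm_sq a

lemma rin_comm (a b : R4) : rin a b = rin b a := by unfold rin; exact real_inner_comm b a
lemma rin_add_right (a b c : R4) : rin a (b + c) = rin a b + rin a c := inner_add_right a b c
lemma rin_neg_right (a b : R4) : rin a (-b) = -rin a b := inner_neg_right a b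
lemma rin_smul_right (a b : R4) (c : ℝ) : rin a (c • b) = c * rin a b := real_inner_smul_right a b c

lemma pd_Jc {f : R2 → R4} {x : R2} (hf : DifferentiableAt ℝ f x) (j : Fin 2) :
    pd j (fun y => Jc (f y)) x = Jc (pd j f x) := by
  unfold pd
  have h : HasFDerivAt (fun y => Jc (f y)) (JL.comp (fderiv ℝ f x)) x := by
    rw [Jc_eq]; exact JL.hasFDerivAt.comp x hf.hasFDerivAt
  rw [h.fderiv, Jc_eq]; rfl

lemma diff_Jc {f : R2 → R4} {x : R2} (hf : DifferentiableAt ℝ f x) :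
    DifferentiableAt ℝ (fun y => Jc (f y)) x := by
  rw [Jc_eq]; exact JL.differentiableAt.comp x hf

end Helpers

/-- The second conservation identity (k-2) of the paper in conformal (flat) form:
away from zeros of `G`,
`𝔯³·∇β·∇𝔯 = e^{2λ}·𝔯²·σ/√(1+σ²) + 4⁻¹·div(𝔯⁴·∇σ/(1+σ²))`, with
`𝔯²·σ/√(1+σ²) = 2φ`. -/
theorem second_conservation_identity (Ω : Set R2) (G : R2 → R4) (φ β lam : R2 → ℝ)
    (hdat : HMinimalDatum Ω G φ β lam) :
    ∀ x ∈ Ω, G x ≠ 0 →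
      ((kGauge G φ x) ^ 3 *
          (pd 0 β x * pd 0 (kGauge G φ) x + pd 1 β x * pd 1 (kGauge G φ) x) =
        Real.exp (2 * lam x) *
            ((kGauge G φ x) ^ 2 * phase G φ x / Real.sqrt (1 + (phase G φ x) ^ 2)) +
          (1/4) *
            (pd 0 (fun y => (kGauge G φ y) ^ 4 * pd 0 (phase G φ) y /
                (1 + (phase G φ y) ^ 2)) x +
              pd 1 (fun y => (kGauge G φ y) ^ 4 * pd 1 (phase G φ) y /
                (1 + (phase G φ y) ^ 2)) x)) ∧
      (kGauge G φ x) ^ 2 * phase G φ x / Real.sqrt (1 + (phase G φ x) ^ 2) =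
        2 * φ x := by
  intro x hx hGx
  set u : R2 → ℝ := fun y => rin (G y) (G y) with hu_def
  have hmem : ∀ᶠ y in nhds x, y ∈ Ω := hdat.isOpen.eventually_mem hx
  -- basic differentiability
  have hGd : ∀ y ∈ Ω, DifferentiableAt ℝ G y :=
    fun y hy => (hdat.smooth_G y hy).differentiableAt (by simp)
  have hpdGc : ∀ y ∈ Ω, ∀ j, ContDiffAt ℝ (⊤ : ℕ∞) (pd j G) y :=
    fun y hy j => contDiffAt_pd (hdat.smooth_G y hy) j
  have hpdGd : ∀ y ∈ Ω, ∀ j, DifferentiableAt ℝ (pd j G) y :=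
    fun y hy j => (hpdGc y hy j).differentiableAt (by simp)
  have hφd : ∀ y ∈ Ω, DifferentiableAt ℝ φ y :=
    fun y hy => (hdat.smooth_φ y hy).differentiableAt (by simp)
  have hpdφc : ∀ y ∈ Ω, ∀ j, ContDiffAt ℝ (⊤ : ℕ∞) (pd j φ) y :=
    fun y hy j => contDiffAt_pd (hdat.smooth_φ y hy) j
  have hpdφd : ∀ y ∈ Ω, ∀ j, DifferentiableAt ℝ (pd j φ) y :=
    fun y hy j => (hpdφc y hy j).differentiableAt (by simp)
  have huc : ∀ y ∈ Ω, ContDiffAt ℝ (⊤ : ℕ∞) u y :=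
    fun y hy => ContDiffAt.inner ℝ (hdat.smooth_G y hy) (hdat.smooth_G y hy)
  have hud : ∀ y ∈ Ω, DifferentiableAt ℝ u y :=
    fun y hy => (huc y hy).differentiableAt (by simp)
  have hpdud : ∀ y ∈ Ω, ∀ j, DifferentiableAt ℝ (pd j u) y :=
    fun y hy j => (contDiffAt_pd (huc y hy) j).differentiableAt (by simp)
  -- norm/inner
  have hnorm : ∀ y, ‖G y‖ ^ 2 = u y := fun y => (rin_self (G y)).symm
  have hux : 0 < u x := by
    have h : 0 < ‖G x‖ := norm_pos_iff.mpr hGx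
    have h2 : u x = ‖G x‖ ^ 2 := (hnorm x).symm
    rw [h2]; positivity
  -- first derivatives of u
  have hpdu : ∀ y ∈ Ω, ∀ j, pd j u y = 2 * rin (G y) (pd j G y) := by
    intro y hy j
    rw [hu_def, pd_inner (hGd y hy) (hGd y hy) j, rin_comm (pd j G y) (G y)]
    ring
  -- second derivatives of u at x
  have hppu : ∀ j, pd j (pd j u) x
      = 2 * (rin (pd j G x) (pd j G x) + rin (G x) (pd j (pd j G) x)) := by
    intro j
    have hev : pd j u =ᶠ[nhds x] fun y => 2 * rin (G y) (pd j G y) :=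
      hmem.mono fun y hy => hpdu y hy j
    rw [pd_congr hev j]
    have hin : DifferentiableAt ℝ (fun y => rin (G y) (pd j G y)) x := by
      exact DifferentiableAt.inner ℝ (hGd x hx) (hpdGd x hx j)
    rw [pd_const_mul hin 2 j, pd_inner (hGd x hx) (hpdGd x hx j) j]
  -- conformality: |∂ⱼG|² = e^{2λ}
  have hn : ∀ j : Fin 2, ‖pd j G x‖ = Real.exp (lam x) := by
    intro j; fin_cases j
    · exact hdat.conf_norm₁ x hx
    · exact hdat.conf_norm₂ x hx
  have hE : ∀ j : Fin 2, rin (pd j G x) (pd j G x) = Real.exp (2 * lam x) := by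
    intro j
    rw [rin_self, hn j, show (2:ℝ) * lam x = lam x + lam x by ring, Real.exp_add]
    ring
  -- ⟨G, ΔG⟩
  have hGlapG : rin (G x) (pd 0 (pd 0 G) x + pd 1 (pd 1 G) x)
      = -(2 * pd 0 β x * pd 0 φ x + 2 * pd 1 β x * pd 1 φ x) := by
    have h1 : pd 0 (pd 0 G) x + pd 1 (pd 1 G) x
        = -Jc (Jc (pd 0 (pd 0 G) x + pd 1 (pd 1 G) x)) := by
      rw [Jc_Jc]; simp
    have h2 : Jc (lap G x) = (2 * pd 0 β x) • pd 0 G x + (2 * pd 1 β x) • pd 1 G x :=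
      hdat.hminimal x hx
    have h2' : Jc (pd 0 (pd 0 G) x + pd 1 (pd 1 G) x)
        = (2 * pd 0 β x) • pd 0 G x + (2 * pd 1 β x) • pd 1 G x :=
      hdat.hminimal x hx
    rw [h1, h2']
    rw [Jc_add, Jc_smul, Jc_smul]
    rw [neg_add, rin_add_right, rin_neg_right, rin_neg_right,
      rin_smul_right, rin_smul_right,
      ← hdat.legendrian x hx 0, ← hdat.legendrian x hx 1]
    ring
  -- Laplacian of u at x
  have hlapu : pd 0 (pd 0 u) x + pd 1 (pd 1 u) x
      = 4 * Real.exp (2 * lam x)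
        - 4 * (pd 0 β x * pd 0 φ x + pd 1 β x * pd 1 φ x) := by
    rw [hppu 0, hppu 1, hE 0, hE 1]
    have := hGlapG
    rw [rin_add_right] at this
    linarith
  -- second derivatives of φ
  have hppφ : ∀ j, pd j (pd j φ) x = rin (G x) (Jc (pd j (pd j G) x)) := by
    intro j
    have hev : pd j φ =ᶠ[nhds x] fun y => rin (G y) (Jc (pd j G y)) :=
      hmem.mono fun y hy => hdat.legendrian y hy j
    rw [pd_congr hev j]
    have hg : DifferentiableAt ℝ (fun y => Jc (pd j G y)) x := diff_Jc (hpdGd x hx j)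
    rw [pd_inner (hGd x hx) hg j, pd_Jc (hpdGd x hx j) j, rin_Jc_self]
    ring
  -- Laplacian of φ at x
  have hlapφ : pd 0 (pd 0 φ) x + pd 1 (pd 1 φ) x
      = pd 0 β x * pd 0 u x + pd 1 β x * pd 1 u x := by
    rw [hppφ 0, hppφ 1, ← rin_add_right, ← Jc_add]
    have h3 : Jc (pd 0 (pd 0 G) x + pd 1 (pd 1 G) x)
        = (2 * pd 0 β x) • pd 0 G x + (2 * pd 1 β x) • pd 1 G x :=
      hdat.hminimal x hx
    rw [h3, rin_add_right, rin_smul_right, rin_smul_right,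
      hpdu x hx 0, hpdu x hx 1]
    ring
  -- phase in terms of u
  have hphase : phase G φ = fun y => 2 * φ y / u y := by
    funext y; simp only [phase]; rw [hnorm]
  -- kGauge^4 = u² + (2φ)²
  have hk4 : ∀ y, kGauge G φ y ^ 4 = u y ^ 2 + (2 * φ y) ^ 2 := by
    intro y
    have hA : (0:ℝ) ≤ ‖G y‖ ^ 4 + 4 * φ y ^ 2 := by positivity
    have h1 : kGauge G φ y ^ (4:ℕ) = ‖G y‖ ^ 4 + 4 * φ y ^ 2 := by
      simp only [kGauge]; rw [ ← Real.rpow_natCast (_ ^ ((1:ℝ)/4)) 4, ← Real.rpow_mul hA]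
      norm_num
    rw [h1, show ‖G y‖ ^ 4 = (‖G y‖ ^ 2) ^ 2 by ring, hnorm]
    ring
  -- eventually positive u
  have hev0 : ∀ᶠ y in nhds x, y ∈ Ω ∧ 0 < u y := by
    have hc : ContinuousAt u x := (huc x hx).continuousAt
    exact hmem.and (hc (Ioi_mem_nhds hux))
  -- the divergence-term integrand equals u·(2∂φ) − 2φ·∂u near x
  have hS : ∀ j : Fin 2,
      (fun y => kGauge G φ y ^ 4 * pd j (phase G φ) y / (1 + phase G φ y ^ 2))
        =ᶠ[nhds x] fun y => u y * (2 * pd j φ y) - 2 * φ y * pd j u y := by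
    intro j
    filter_upwards [hev0] with y hy
    obtain ⟨hyΩ, hyu⟩ := hy
    have hyu' : u y ≠ 0 := ne_of_gt hyu
    have hpdσ : pd j (phase G φ) y
        = (2 * pd j φ y * u y - 2 * φ y * pd j u y) / u y ^ 2 := by
      simp only [hphase]
      have ha2 : DifferentiableAt ℝ (fun z => 2 * φ z) y :=
        (hφd y hyΩ).const_mul 2
      rw [pd_div ha2 (hud y hyΩ) hyu' j, pd_const_mul (hφd y hyΩ) 2 j]
    have h1p : 1 + phase G φ y ^ 2 = (u y ^ 2 + (2 * φ y) ^ 2) / u y ^ 2 := by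
      simp only [hphase]
      field_simp
    have hA0 : u y ^ 2 + (2 * φ y) ^ 2 ≠ 0 := by positivity
    rw [hpdσ, hk4 y, h1p]
    field_simp
  -- derivative of the simplified integrand
  have hdiv : ∀ j : Fin 2,
      pd j (fun y => u y * (2 * pd j φ y) - 2 * φ y * pd j u y) x
        = 2 * u x * pd j (pd j φ) x - 2 * φ x * pd j (pd j u) x := by
    intro j
    have h2φ : DifferentiableAt ℝ (fun y => 2 * φ y) x := (hφd x hx).const_mul 2
    have h2pφ : DifferentiableAt ℝ (fun y => 2 * pd j φ y) x :=
      (hpdφd x hx j).const_mul 2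
    have hm1 : DifferentiableAt ℝ (fun y => u y * (2 * pd j φ y)) x :=
      (hud x hx).mul h2pφ
    have hm2 : DifferentiableAt ℝ (fun y => 2 * φ y * pd j u y) x :=
      h2φ.mul (hpdud x hx j)
    rw [pd_sub hm1 hm2 j, pd_mul (hud x hx) h2pφ j, pd_mul h2φ (hpdud x hx j) j,
      pd_const_mul (hpdφd x hx j) 2 j, pd_const_mul (hφd x hx) 2 j]
    ring
  -- gradient of kGauge
  have hAd : DifferentiableAt ℝ (fun y => u y ^ 2 + (2 * φ y) ^ 2) x := by
    have h1 : DifferentiableAt ℝ (fun y => u y ^ 2) x := (hud x hx).pow 2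
    have h2 : DifferentiableAt ℝ (fun y => (2 * φ y) ^ 2) x :=
      ((hφd x hx).const_mul 2).pow 2
    exact h1.add h2
  have hkd : DifferentiableAt ℝ (kGauge G φ) x := by
    have hfun : kGauge G φ = fun y => (u y ^ 2 + (2 * φ y) ^ 2) ^ ((1:ℝ)/4) := by
      funext y
      simp only [kGauge]; rw [ show ‖G y‖ ^ 4 = (‖G y‖ ^ 2) ^ 2 by ring, hnorm]
      norm_num
      ring_nf
    have hAx : u x ^ 2 + (2 * φ x) ^ 2 ≠ 0 := by positivity
    rw [hfun]
    exact hAd.rpow_const (Or.inl hAx)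
  have hk3 : ∀ j : Fin 2, 4 * kGauge G φ x ^ 3 * pd j (kGauge G φ) x
      = 2 * u x * pd j u x + 2 * (2 * φ x) * (2 * pd j φ x) := by
    intro j
    have h1 : pd j (fun y => kGauge G φ y ^ 4) x
        = 4 * kGauge G φ x ^ 3 * pd j (kGauge G φ) x := by
      rw [pd_pow hkd 4 j]
      norm_num
    have h2 : (fun y => kGauge G φ y ^ 4) = fun y => u y ^ 2 + (2 * φ y) ^ 2 :=
      funext hk4
    rw [← h1, h2]
    have hd1 : DifferentiableAt ℝ (fun y => u y ^ 2) x := (hud x hx).pow 2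
    have hd2 : DifferentiableAt ℝ (fun y => (2 * φ y) ^ 2) x :=
      ((hφd x hx).const_mul 2).pow 2
    rw [pd_add hd1 hd2 j, pd_pow (hud x hx) 2 j,
      pd_pow ((hφd x hx).const_mul 2) 2 j, pd_const_mul (hφd x hx) 2 j]
    norm_num
  -- second conclusion
  have hσx : phase G φ x = 2 * φ x / u x := by simp only [hphase]
  have hA0x : (0:ℝ) < u x ^ 2 + (2 * φ x) ^ 2 := by positivity
  have hk2 : kGauge G φ x ^ 2 = Real.sqrt (u x ^ 2 + (2 * φ x) ^ 2) := by
    rw [← hk4 x, show kGauge G φ x ^ 4 = (kGauge G φ x ^ 2) ^ 2 by ring,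
      Real.sqrt_sq (sq_nonneg _)]
  have hsq : Real.sqrt (1 + phase G φ x ^ 2)
      = Real.sqrt (u x ^ 2 + (2 * φ x) ^ 2) / u x := by
    have h1 : 1 + phase G φ x ^ 2 = (u x ^ 2 + (2 * φ x) ^ 2) / u x ^ 2 := by
      rw [hσx]; field_simp
    rw [h1, Real.sqrt_div (le_of_lt hA0x), Real.sqrt_sq hux.le]
  have hconc2 : kGauge G φ x ^ 2 * phase G φ x / Real.sqrt (1 + phase G φ x ^ 2)
      = 2 * φ x := by
    have hsA : 0 < Real.sqrt (u x ^ 2 + (2 * φ x) ^ 2) := Real.sqrt_pos.mpr hA0x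
    rw [hk2, hsq, hσx]
    field_simp
  refine ⟨?_, hconc2⟩
  rw [hconc2]
  rw [pd_congr (hS 0) 0, pd_congr (hS 1) 1, hdiv 0, hdiv 1]
  have e0 := hk3 0
  have e1 := hk3 1
  have l1 := hlapφ
  have l2 := hlapu
  linear_combination (pd 0 β x / 4) * e0 + (pd 1 β x / 4) * e1
    - (u x / 2) * l1 + (φ x / 2) * l2
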